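/- arXiv:1812.03212 — 3 statements merged into one kernel-verified Lean document; each statement's English description precedes it below -/
import Mathlib

section
/- For every n ≥ 2 and every k with 1 ≤ k ≤ 2^(n-1), let x_k = 2^(n-1) + k - 1 and v_k = Λ_n(x_k). Then v_k / 2^(C(n-1,2)) - (k - 1/2) lies in the interval [-1/2, 1/2); in particular |v_k / 2^(C(n-1,2)) - (k - 1/2)| ≤ 1/2, i.e. the scaled encoded vertices v_k / 2^(C(n-1,2)) of the polytope 1-CUT(n) lie approximately on the line y = x - 1/2 with residuals of absolute value at most 1/2. -/
/-!
Deleting the leading bit `b_1` of an `(n + 1)`-bit word `x` splits the encoding as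
`Λ_{n+1}(x) = 2^C(n,2) · r + Λ_n(x)`, where `Λ_n` only reads the low `n` bits and `r < 2^n`
records the concurrences of `b_1` with the other bits; by induction `Λ_n(x) < 2^C(n,2)`.
For `x = 2^n + y` with `y < 2^n` the leading bit is `1`, so `r = y` and
`Λ_{n+1}(x) / 2^C(n,2) = y + θ` with `0 ≤ θ < 1`.
-/

/-- `concEnc n x` is `Λ_n(x)`: the natural number whose `C(n,2)`-bit binary
representation is the concurrence vector `λ(x_[n])` of the `n`-bit binary
representation `(b_1, …, b_n)` of `x` (with `b_1` most significant).
The bit for the pair `(i,j)`, `1 ≤ i < j ≤ n`, equals `1` iff `b_i = b_j`;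
pairs are ordered `(1,2),(1,3),…,(1,n),(2,3),…,(n-1,n)` with `(1,2)` the most
significant bit. -/
def concEnc (n x : ℕ) : ℕ :=
  ∑ i ∈ Finset.Icc 1 n, ∑ j ∈ Finset.Icc (i + 1) n,
    if x.testBit (n - i) = x.testBit (n - j)
    then 2 ^ (n.choose 2 - 1 - ((i - 1) * (2 * n - i) / 2 + (j - i - 1)))
    else 0

open Finset

theorem Finset.sum_Icc_add_one {M : Type*} [AddCommMonoid M] (a b : ℕ) (f : ℕ → M) :
    ∑ i ∈ Icc (a + 1) (b + 1), f i = ∑ i ∈ Icc a b, f (i + 1) := by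
  rw [← map_add_right_Icc, sum_map]
  rfl

-- The concurrences of the leading bit of an `(n + 1)`-bit word `x` with its other bits, i.e. the
-- first `n` entries of `λ(x_[n+1])`, read as an `n`-bit number.
def concRow (n x : ℕ) : ℕ :=
  ∑ j ∈ range n with x.testBit j = x.testBit n, 2 ^ j

theorem concRow_lt_two_pow (n x : ℕ) : concRow n x < 2 ^ n :=
  Nat.geomSum_lt le_rfl fun _ hj => mem_range.1 (mem_filter.1 hj).1

theorem concRow_two_pow_add {n y : ℕ} (hy : y < 2 ^ n) : concRow n (2 ^ n + y) = y := by
  have hbits : (range n).filter (fun j => (2 ^ n + y).testBit j = (2 ^ n + y).testBit n)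
      = y.bitIndices.toFinset := by
    ext j
    simp only [mem_filter, mem_range, List.mem_toFinset, Nat.mem_bitIndices,
      Nat.testBit_two_pow_add_eq, Nat.testBit_lt_two_pow hy]
    constructor
    · rintro ⟨hj, h⟩
      simpa [Nat.testBit_two_pow_add_gt hj] using h
    · intro h
      have hj : j < n :=
        (Nat.pow_lt_pow_iff_right (by norm_num)).1 ((Nat.two_pow_le_of_mem_bitIndices
          (Nat.mem_bitIndices.2 h)).trans_lt hy)
      simp [Nat.testBit_two_pow_add_gt hj, h, hj]
  rw [concRow, hbits, sum_toFinset_bitIndices_two_pow]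

-- `(i - 1) * (2 * n - i) / 2` is the number of pairs in the rows above row `i`, the offset of
-- row `i` in `concEnc n`.
theorem pairsAbove_succ {n i : ℕ} (hi : 1 ≤ i) (hin : i ≤ n) :
    i * (2 * (n + 1) - (i + 1)) / 2 = (i - 1) * (2 * n - i) / 2 + n := by
  have : i * (2 * (n + 1) - (i + 1)) = (i - 1) * (2 * n - i) + n * 2 := by
    obtain ⟨i, rfl⟩ := Nat.exists_eq_add_of_le' hi
    obtain ⟨d, rfl⟩ := Nat.exists_eq_add_of_le hin
    rw [show 2 * (i + 1 + d + 1) - (i + 1 + 1) = 2 * d + i + 2 by omega,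
      show 2 * (i + 1 + d) - (i + 1) = 2 * d + i + 1 by omega, Nat.add_sub_cancel]
    ring
  rw [this, Nat.add_mul_div_right _ _ two_pos]

theorem Nat.choose_two_succ (n : ℕ) : (n + 1).choose 2 = n.choose 2 + n := by
  rw [Nat.choose_succ_succ', Nat.choose_one_right, add_comm]

theorem concEnc_succ (n x : ℕ) :
    concEnc (n + 1) x = 2 ^ n.choose 2 * concRow n x + concEnc n x := by
  have hchoose := Nat.choose_two_succ n
  rw [concEnc, ← insert_Icc_add_one_left_eq_Icc (by omega), sum_insert (by simp)]
  congr 1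
  · rw [concRow, sum_filter, mul_sum]
    refine sum_nbij' (fun j => n + 1 - j) (fun m => n + 1 - m) ?_ ?_ ?_ ?_ ?_ <;>
      intro j hj <;> simp only [mem_Icc, mem_range] at hj ⊢
    · omega
    · omega
    · omega
    · omega
    · rw [show (n + 1).choose 2 - 1 - ((1 - 1) * (2 * (n + 1) - 1) / 2 + (j - 1 - 1))
          = n.choose 2 + (n + 1 - j) by
            simp only [hchoose, Nat.sub_self, zero_mul, Nat.zero_div]; omega,
        pow_add, Nat.add_sub_cancel, mul_ite, mul_zero]
      exact if_congr eq_comm rfl rfl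
  · rw [sum_Icc_add_one, concEnc]
    refine sum_congr rfl fun i hi => ?_
    rw [sum_Icc_add_one]
    refine sum_congr rfl fun j hj => ?_
    simp only [mem_Icc] at hi hj
    rw [Nat.add_sub_add_right, Nat.add_sub_add_right, Nat.add_sub_cancel, Nat.add_sub_add_right,
      pairsAbove_succ hi.1 (by omega), hchoose]
    congr 2
    omega

theorem concEnc_lt_two_pow (n x : ℕ) : concEnc n x < 2 ^ n.choose 2 := by
  induction n with
  | zero => simp [concEnc]
  | succ n ih =>
    calc concEnc (n + 1) x = 2 ^ n.choose 2 * concRow n x + concEnc n x := concEnc_succ n x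
      _ < 2 ^ n.choose 2 * (concRow n x + 1) := by rw [mul_add_one]; exact Nat.add_lt_add_left ih _
      _ ≤ 2 ^ n.choose 2 * 2 ^ n := Nat.mul_le_mul_left _ (concRow_lt_two_pow n x)
      _ = 2 ^ (n + 1).choose 2 := by rw [← pow_add, Nat.choose_two_succ]

/-- For `n ≥ 2` and `1 ≤ k ≤ 2^(n-1)`, with `x_k = 2^(n-1)+k-1` and
`v_k = Λ_n(x_k)`, the quantity `v_k / 2^C(n-1,2) - (k - 1/2)` lies in the
interval `[-1/2, 1/2)`; in particular its absolute value is at most `1/2`. -/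
theorem stmt_0 (n k : ℕ) (hn : 2 ≤ n) (hk1 : 1 ≤ k) (hk2 : k ≤ 2 ^ (n - 1)) :
    ((concEnc n (2 ^ (n - 1) + k - 1) : ℝ) / 2 ^ ((n - 1).choose 2)
        - ((k : ℝ) - 1 / 2)) ∈ Set.Ico (-(1 / 2) : ℝ) (1 / 2) ∧
    |(concEnc n (2 ^ (n - 1) + k - 1) : ℝ) / 2 ^ ((n - 1).choose 2)
        - ((k : ℝ) - 1 / 2)| ≤ 1 / 2 := by
  obtain ⟨m, rfl⟩ : ∃ m, n = m + 1 := ⟨n - 1, by omega⟩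
  obtain ⟨y, rfl⟩ : ∃ y, k = y + 1 := ⟨k - 1, by omega⟩
  rw [Nat.add_sub_cancel] at hk2 ⊢
  rw [show 2 ^ m + (y + 1) - 1 = 2 ^ m + y by omega, concEnc_succ,
    concRow_two_pow_add (by omega)]
  set r := concEnc m (2 ^ m + y)
  have hpow : (0 : ℝ) < 2 ^ m.choose 2 := by positivity
  have hr : (r : ℝ) / 2 ^ m.choose 2 < 1 :=
    (div_lt_one hpow).2 (by exact_mod_cast concEnc_lt_two_pow m _)
  have hr0 : (0 : ℝ) ≤ r / 2 ^ m.choose 2 := by positivity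
  have hsplit : ((2 ^ m.choose 2 * y + r : ℕ) : ℝ) / 2 ^ m.choose 2 - ((y + 1 : ℕ) - 1 / 2)
      = r / 2 ^ m.choose 2 - 1 / 2 := by
    push_cast
    field_simp
    ring
  rw [hsplit]
  exact ⟨⟨by linarith, by linarith⟩, abs_le.2 ⟨by linarith, by linarith⟩⟩
end

section
/- For every n ≥ 2 and every k with 1 ≤ k ≤ 2^(n-1), let x_k = 2^(n-1) + k - 1 and v_k = Λ_n(x_k). Then v_k = (k-1)·2^(C(n-1,2)) + Λ_{n-1}(k-1), where k-1 is interpreted via its (n-1)-bit binary representation. -/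
/-! For `x = 2 ^ m + y` with `y < 2 ^ m`, the leading bit `b_1` is `1`, so the first row
`λ_12, …, λ_1n` of the concurrence vector is `b_2, …, b_n`, the binary digits of `y`; it fills the
top `m` of the `C(m + 1, 2) = C(m, 2) + m` bits. The remaining rows compare only `b_2, …, b_n`
and, in the same order, make up `Λ_m(y)`. -/

open Finset

lemma Nat.sum_range_ite_testBit {m y : ℕ} (hy : y < 2 ^ m) :
    ∑ p ∈ range m, (if y.testBit p then 2 ^ p else 0) = y := by
  rw [← sum_filter]
  conv_rhs => rw [← Finset.sum_toFinset_bitIndices_two_pow y]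
  congr 1
  ext p
  simp only [mem_filter, mem_range, List.mem_toFinset, Nat.mem_bitIndices, and_iff_right_iff_imp]
  intro hp
  exact (Nat.pow_lt_pow_iff_right (by norm_num)).1 ((Nat.ge_two_pow_of_testBit hp).trans_lt hy)

/-- `(i - 1) * (2 * n - i) / 2` is the number of pairs in the rows before row `i`: row `i + 1` of
`m + 1` bits starts `m` pairs later than row `i` of `m` bits. -/
lemma Nat.mul_sub_div_two_succ {m i : ℕ} (hi : 1 ≤ i) (him : i ≤ m) :
    i * (2 * (m + 1) - (i + 1)) / 2 = (i - 1) * (2 * m - i) / 2 + m := by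
  obtain ⟨t, rfl⟩ : ∃ t, i = t + 1 := ⟨i - 1, by omega⟩
  obtain ⟨d, rfl⟩ : ∃ d, m = t + d + 1 := ⟨m - t - 1, by omega⟩
  have key : (t + 1) * (t + 2 * d + 2) = t * (t + 2 * d + 1) + (t + d + 1) * 2 := by ring
  rw [show 2 * (t + d + 1 + 1) - (t + 1 + 1) = t + 2 * d + 2 by omega,
    show 2 * (t + d + 1) - (t + 1) = t + 2 * d + 1 by omega, key,
    Nat.add_mul_div_right _ _ two_pos, Nat.add_sub_cancel]

lemma concEnc_congr {n x y : ℕ} (h : ∀ p < n, x.testBit p = y.testBit p) :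
    concEnc n x = concEnc n y := by
  unfold concEnc
  refine sum_congr rfl fun i hi => sum_congr rfl fun j hj => ?_
  simp only [mem_Icc] at hi hj
  rw [h _ (by omega), h _ (by omega)]

lemma concEnc_succ_s1 (m x : ℕ) :
    concEnc (m + 1) x = 2 ^ m.choose 2 *
      ∑ p ∈ range m, (if x.testBit m = x.testBit p then 2 ^ p else 0) + concEnc m x := by
  have hC : (m + 1).choose 2 = m.choose 2 + m := by
    rw [Nat.choose_succ_succ', Nat.choose_one_right, add_comm]
  rw [concEnc, ← insert_Icc_add_one_left_eq_Icc (by omega : 1 ≤ m + 1), sum_insert (by simp),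
    ← map_add_right_Icc 1 m 1, sum_map, sum_map]
  congr 1
  · rw [mul_sum]
    refine sum_nbij' (fun j => m - j) (fun p => m - p) ?_ ?_ ?_ ?_ ?_
    all_goals try (intro j hj; simp at hj ⊢; omega)
    intro j hj
    simp only [mem_Icc] at hj
    have hexp : (m + 1).choose 2 - 1 - (j - 1) = m.choose 2 + (m - j) := by
      rw [hC]; omega
    simp only [addRightEmbedding_apply, Nat.add_sub_cancel, Nat.add_sub_add_right, Nat.sub_self,
      zero_mul, Nat.zero_div, zero_add, hexp, mul_ite, mul_zero, pow_add]
  · rw [concEnc]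
    refine sum_congr rfl fun i hi => ?_
    rw [addRightEmbedding_apply, ← map_add_right_Icc (i + 1) m 1, sum_map]
    refine sum_congr rfl fun j hj => ?_
    simp only [mem_Icc] at hi hj
    have hexp : (m + 1).choose 2 - 1 - (i * (2 * (m + 1) - (i + 1)) / 2 + (j - i - 1))
        = m.choose 2 - 1 - ((i - 1) * (2 * m - i) / 2 + (j - i - 1)) := by
      rw [Nat.mul_sub_div_two_succ hi.1 hi.2, hC]; omega
    simp only [addRightEmbedding_apply, Nat.add_sub_add_right, Nat.add_sub_cancel]
    rw [hexp]

/-- For `n ≥ 2` and `1 ≤ k ≤ 2^(n-1)`, with `x_k = 2^(n-1)+k-1`,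
`Λ_n(x_k) = (k-1)·2^C(n-1,2) + Λ_{n-1}(k-1)`. -/
theorem stmt_1 (n k : ℕ) (hn : 2 ≤ n) (hk1 : 1 ≤ k) (hk2 : k ≤ 2 ^ (n - 1)) :
    concEnc n (2 ^ (n - 1) + k - 1)
      = (k - 1) * 2 ^ ((n - 1).choose 2) + concEnc (n - 1) (k - 1) := by
  obtain ⟨m, rfl⟩ : ∃ m, n = m + 1 := ⟨n - 1, by omega⟩
  obtain ⟨y, rfl⟩ : ∃ y, k = y + 1 := ⟨k - 1, by omega⟩
  simp only [Nat.add_sub_cancel] at hk2 ⊢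
  have hy : y < 2 ^ m := by omega
  have hlow : ∀ p < m, (2 ^ m + y).testBit p = y.testBit p := fun p hp =>
    Nat.testBit_two_pow_add_gt hp y
  have htop : (2 ^ m + y).testBit m = true := by
    rw [Nat.testBit_two_pow_add_eq, Nat.testBit_lt_two_pow hy, Bool.not_false]
  have hrow : ∑ p ∈ range m,
      (if (2 ^ m + y).testBit m = (2 ^ m + y).testBit p then 2 ^ p else 0) = y := by
    refine (sum_congr rfl fun p hp => ?_).trans (Nat.sum_range_ite_testBit hy)
    simp only [htop, hlow p (mem_range.1 hp), Bool.true_eq]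
  rw [Nat.add_sub_assoc (by omega), Nat.add_sub_cancel, concEnc_succ_s1, hrow, concEnc_congr hlow,
    mul_comm]
end

section
/- Let n ≥ 2 and let x, y be natural numbers with 2^(n-1) ≤ x < y ≤ 2^n - 1 (i.e. both are n-bit numbers with leading digit 1). Then Λ_n(x) < Λ_n(y). -/
/-!
With leading bit `b₁ = 1`, the first row `(λ₁₂, …, λ₁ₙ)` of the concurrence vector is
`(b₂, …, bₙ)`, so the top `n - 1` bits of `Λₙ(z)` spell out `z - 2^(n-1)`. The other rows occupy
distinct bit positions below `m = C(n,2) - (n - 1)`, hence contribute less than `2^m`. So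
`Λₙ(z) = 2^m (z - 2^(n-1)) + (something < 2^m)`, which is strictly increasing in `z`.
-/

open Finset

theorem Nat.mod_two_pow_eq_sum_testBit (x t : ℕ) :
    x % 2 ^ t = ∑ k ∈ range t, if x.testBit k then 2 ^ k else 0 := by
  induction t with
  | zero => simp [Nat.mod_one]
  | succ t ih =>
    rw [sum_range_succ, ← ih, pow_succ, Nat.mod_mul, Nat.testBit_eq_decide_div_mod_eq]
    rcases Nat.mod_two_eq_zero_or_one (x / 2 ^ t) with h | h <;> simp [h]

theorem Finset.sum_lt_two_pow_of_injOn {ι : Type*} {s : Finset ι} {f e : ι → ℕ} {m : ℕ}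
    (hf : ∀ k ∈ s, f k ≤ 2 ^ e k) (he : Set.InjOn e s) (hm : ∀ k ∈ s, e k < m) :
    ∑ k ∈ s, f k < 2 ^ m :=
  calc ∑ k ∈ s, f k ≤ ∑ k ∈ s, 2 ^ e k := sum_le_sum hf
    _ = ∑ t ∈ s.image e, 2 ^ t := (sum_image he).symm
    _ < 2 ^ m := Nat.geomSum_lt le_rfl (by simpa using hm)

-- The number of pairs `(i', j)` with `i' < i`, i.e. the position of `λ_{i,i+1}` counted from the top.
def rowStart (n i : ℕ) : ℕ := (i - 1) * (2 * n - i) / 2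

theorem rowStart_succ {n i : ℕ} (h1 : 1 ≤ i) (h2 : i ≤ n) :
    rowStart n (i + 1) = rowStart n i + (n - i) := by
  obtain ⟨a, rfl⟩ := Nat.exists_eq_add_of_le' h1
  obtain ⟨b, rfl⟩ := Nat.exists_eq_add_of_le h2
  unfold rowStart
  rw [show a + 1 + 1 - 1 = a + 1 by omega, show 2 * (a + 1 + b) - (a + 1 + 1) = a + 2 * b by omega,
    show a + 1 - 1 = a by omega, show 2 * (a + 1 + b) - (a + 1) = a + 2 * b + 1 by omega,
    show a + 1 + b - (a + 1) = b by omega,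
    show (a + 1) * (a + 2 * b) = a * (a + 2 * b + 1) + b * 2 by ring,
    Nat.add_mul_div_right _ _ two_pos]

theorem rowStart_two (n : ℕ) : rowStart n 2 = n - 1 := by
  unfold rowStart; omega

theorem rowStart_self (n : ℕ) : rowStart n n = n.choose 2 := by
  rw [rowStart, Nat.choose_two_right, show 2 * n - n = n by omega, Nat.mul_comm]

theorem rowStart_mono {n i i' : ℕ} (h1 : 1 ≤ i) (hii' : i ≤ i') (hi'n : i' ≤ n) :
    rowStart n i ≤ rowStart n i' := by
  induction i', hii' using Nat.le_induction with
  | base => rfl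
  | succ k hik ih => rw [rowStart_succ (h1.trans hik) (by omega)]; omega

theorem rowStart_add_lt_rowStart {n i j i' : ℕ} (h1 : 1 ≤ i) (hij : i < j) (hjn : j ≤ n)
    (hii' : i < i') (hi'n : i' ≤ n) :
    rowStart n i + (j - i - 1) < rowStart n i' := by
  have := rowStart_succ h1 (hij.le.trans hjn)
  have := rowStart_mono (n := n) (i := i + 1) (by omega) hii' hi'n
  omega

theorem rowStart_add_lt_choose_two {n i j : ℕ} (h1 : 1 ≤ i) (hij : i < j) (hjn : j ≤ n) :
    rowStart n i + (j - i - 1) < n.choose 2 :=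
  rowStart_self n ▸ rowStart_add_lt_rowStart h1 hij hjn (by omega) le_rfl

def concTail (n z : ℕ) : ℕ :=
  ∑ i ∈ Icc 2 n, ∑ j ∈ Icc (i + 1) n,
    if z.testBit (n - i) = z.testBit (n - j)
    then 2 ^ (n.choose 2 - 1 - (rowStart n i + (j - i - 1)))
    else 0

theorem concTail_lt (n z : ℕ) : concTail n z < 2 ^ (n.choose 2 - (n - 1)) := by
  rw [concTail, sum_sigma']
  refine sum_lt_two_pow_of_injOn
    (e := fun p ↦ n.choose 2 - 1 - (rowStart n p.1 + (p.2 - p.1 - 1))) ?_ ?_ ?_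
  · intro p _
    split_ifs <;> simp
  · rintro ⟨i, j⟩ hp ⟨i', j'⟩ hq h
    simp only [coe_sigma, Set.mem_sigma_iff, coe_Icc, Set.mem_Icc] at hp hq h
    have hlt := rowStart_add_lt_choose_two (n := n) (by omega) (by omega : i < j) (by omega)
    have hlt' := rowStart_add_lt_choose_two (n := n) (by omega) (by omega : i' < j') (by omega)
    obtain rfl : i = i' := by
      rcases lt_trichotomy i i' with hii' | rfl | hii'
      · have := rowStart_add_lt_rowStart (j := j) (by omega) (by omega) hp.2.2 hii' (by omega)
        omega
      · rfl
      · have := rowStart_add_lt_rowStart (j := j') (by omega) (by omega) hq.2.2 hii' (by omega)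
        omega
    obtain rfl : j = j' := by omega
    rfl
  · rintro ⟨i, j⟩ hp
    simp only [mem_sigma, mem_Icc] at hp ⊢
    have := rowStart_add_lt_choose_two (n := n) (by omega) (by omega : i < j) (by omega)
    have := rowStart_mono (n := n) (by norm_num : 1 ≤ 2) hp.1.1 hp.1.2
    rw [rowStart_two] at this
    omega

theorem concEnc_two_pow_add {n r : ℕ} (hn : 0 < n) (hr : r < 2 ^ (n - 1)) :
    concEnc n (2 ^ (n - 1) + r) =
      2 ^ (n.choose 2 - (n - 1)) * r + concTail n (2 ^ (n - 1) + r) := by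
  set z := 2 ^ (n - 1) + r
  have htop : z.testBit (n - 1) = true := by
    rw [Nat.testBit_two_pow_add_eq, Nat.testBit_lt_two_pow hr, Bool.not_false]
  have hmod : z % 2 ^ (n - 1) = r := by rw [Nat.add_mod_left, Nat.mod_eq_of_lt hr]
  rw [concEnc, ← insert_Icc_add_one_left_eq_Icc hn, sum_insert (by simp), concTail]
  congr 1
  rw [← hmod, Nat.mod_two_pow_eq_sum_testBit, mul_sum]
  refine sum_nbij' (fun j ↦ n - j) (fun k ↦ n - k) ?_ ?_ ?_ ?_ ?_
  · intro j hj; simp only [mem_Icc, mem_range] at hj ⊢; omega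
  · intro k hk; simp only [mem_Icc, mem_range] at hk ⊢; omega
  · intro j hj; simp only [mem_Icc] at hj; omega
  · intro k hk; simp only [mem_range] at hk; omega
  · intro j hj
    simp only [mem_Icc] at hj
    have := rowStart_mono (n := n) (by norm_num : 1 ≤ 2) (by omega) le_rfl
    rw [rowStart_two, rowStart_self] at this
    have hexp : n.choose 2 - 1 - ((1 - 1) * (2 * n - 1) / 2 + (j - 1 - 1)) =
        n.choose 2 - (n - 1) + (n - j) := by
      omega
    rw [htop, hexp, pow_add]
    cases z.testBit (n - j) <;> simp

theorem stmt_3_general (n x y : ℕ) (hx : 2 ^ (n - 1) ≤ x) (hxy : x < y)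
    (hy : y ≤ 2 ^ n - 1) :
    concEnc n x < concEnc n y := by
  have hn : 0 < n := Nat.pos_of_ne_zero <| by rintro rfl; simp at hx hy; omega
  rw [← Nat.two_pow_pred_add_two_pow_pred hn] at hy
  obtain ⟨r, rfl⟩ := Nat.exists_eq_add_of_le hx
  obtain ⟨s, rfl⟩ := Nat.exists_eq_add_of_le (hx.trans hxy.le)
  have hrs : r < s := Nat.lt_of_add_lt_add_left hxy
  have hs : s < 2 ^ (n - 1) :=
    Nat.lt_of_add_lt_add_left <| hy.trans_lt <| Nat.sub_one_lt <| by positivity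
  rw [concEnc_two_pow_add hn (hrs.trans hs), concEnc_two_pow_add hn hs]
  calc _ < s * 2 ^ (n.choose 2 - (n - 1)) :=
        Nat.mul_add_lt_mul_of_lt_of_lt hrs (concTail_lt n _)
    _ ≤ _ := mul_comm s _ ▸ Nat.le_add_right _ _

/-- For `n ≥ 2` and `2^(n-1) ≤ x < y ≤ 2^n - 1` (both `n`-bit numbers with
leading digit `1`), `Λ_n(x) < Λ_n(y)`. -/
theorem stmt_3 (n x y : ℕ) (hn : 2 ≤ n) (hx : 2 ^ (n - 1) ≤ x) (hxy : x < y)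
    (hy : y ≤ 2 ^ n - 1) :
    concEnc n x < concEnc n y :=
  stmt_3_general n x y hx hxy hy
end
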